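/- Let N and m be positive integers with m ≤ N, and let A ∈ ℂ^{m×N} be the partial IDFT matrix. Let i ≥ 1 be an integer with (i+1)N/m ≤ N/2. If the column indices ω_p, ω_q ∈ {1,…,N} satisfy iN/m ≤ |ω_p − ω_q| ≤ (i+1)N/m, then the column correlation satisfies f(ω_p, ω_q) ≤ 1/(m·sin(πi/m)). -/

import Mathlib

/-!
The correlation `⟨a_p, a_q⟩` is `1/m` times the geometric sum `∑_{l<m} z^l` with
`z = exp(2πi(ω_q − ω_p)/N)` on the unit circle, so its modulus is at most
`2 / (m |z − 1|) = 1 / (m |sin(π(ω_q − ω_p)/N)|)`. The hypotheses place `π|ω_p − ω_q|/N` in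
`[πi/m, π/2]`, where the sine is increasing, so this is at most `1 / (m sin(πi/m))`.
-/

open Complex Real

/-- The ω-th column of the partial IDFT matrix `A ∈ ℂ^{m×N}` with entries
`A_{l,ω} = (1/√m)·exp(2πi(l−1)(ω−1)/N)` (here indexed from 0). -/
noncomputable def idftCol (N m : ℕ) (ω : Fin N) : EuclideanSpace ℂ (Fin m) :=
  WithLp.toLp 2 (fun l => ((1 / Real.sqrt m : ℝ) : ℂ) *
    Complex.exp (2 * Real.pi * Complex.I * ((l : ℕ) : ℂ) * ((ω : ℕ) : ℂ) / (N : ℂ)))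

theorem Complex.norm_geom_sum_le_of_norm_eq_one {z : ℂ} (hz : ‖z‖ = 1) (hz1 : z ≠ 1)
    (m : ℕ) : ‖∑ l ∈ Finset.range m, z ^ l‖ ≤ 2 / ‖z - 1‖ := by
  have hnum : ‖z ^ m - 1‖ ≤ 2 := calc
    ‖z ^ m - 1‖ ≤ ‖z ^ m‖ + ‖(1 : ℂ)‖ := norm_sub_le _ _
    _ = 2 := by rw [norm_pow, hz, one_pow, norm_one]; norm_num
  rw [geom_sum_eq hz1, norm_div]
  exact div_le_div_of_nonneg_right hnum (norm_nonneg _)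

theorem Complex.norm_geom_sum_exp_I_mul_le {θ : ℝ} (hθ : Real.sin (θ / 2) ≠ 0) (m : ℕ) :
    ‖∑ l ∈ Finset.range m, exp (I * θ) ^ l‖ ≤ 1 / |Real.sin (θ / 2)| := by
  have hdist : ‖exp (I * θ) - 1‖ = 2 * |Real.sin (θ / 2)| := by
    rw [norm_exp_I_mul_ofReal_sub_one, norm_mul, Real.norm_eq_abs, Real.norm_eq_abs,
      abs_two]
  have hz1 : exp (I * θ) ≠ 1 := by
    rw [← sub_ne_zero, ← norm_ne_zero_iff, hdist]
    positivity
  calc ‖∑ l ∈ Finset.range m, exp (I * θ) ^ l‖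
      ≤ 2 / ‖exp (I * θ) - 1‖ :=
        norm_geom_sum_le_of_norm_eq_one (norm_exp_I_mul_ofReal θ) hz1 m
    _ = 1 / |Real.sin (θ / 2)| := by rw [hdist]; field_simp

theorem Real.sin_le_abs_sin_of_le_abs {a x : ℝ} (ha : 0 ≤ a) (hax : a ≤ |x|)
    (hx : |x| ≤ π / 2) : sin a ≤ |sin x| := by
  rw [abs_sin_eq_sin_abs_of_abs_le_pi (by linarith [pi_pos])]
  exact sin_le_sin_of_le_of_le_pi_div_two (by linarith [pi_pos]) hx hax

theorem inner_idftCol (N m : ℕ) (p q : Fin N) :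
    inner ℂ (idftCol N m p) (idftCol N m q) =
      (m : ℂ)⁻¹ * ∑ l ∈ Finset.range m,
        exp (I * ↑(2 * π * (((q : ℕ) : ℝ) - (p : ℕ)) / N)) ^ l := by
  rw [PiLp.inner_apply, Finset.mul_sum, ← Fin.sum_univ_eq_sum_range]
  refine Finset.sum_congr rfl fun l _ => ?_
  simp only [idftCol, PiLp.toLp_apply, RCLike.inner_apply', map_mul, ← exp_conj, conj_ofReal,
    ← Complex.exp_nat_mul]
  have hscale : ((1 / √(m : ℝ) : ℝ) : ℂ) * ((1 / √(m : ℝ) : ℝ) : ℂ) = (m : ℂ)⁻¹ := by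
    rw [← ofReal_mul, div_mul_div_comm, one_mul, Real.mul_self_sqrt (Nat.cast_nonneg m)]
    push_cast
    ring
  rw [mul_mul_mul_comm, hscale, ← Complex.exp_add]
  congr 2
  simp only [map_div₀, map_mul, conj_I, conj_ofReal, map_natCast, map_ofNat]
  push_cast
  ring

theorem norm_inner_idftCol_le (N m : ℕ) (p q : Fin N)
    (h : Real.sin (π * (((q : ℕ) : ℝ) - (p : ℕ)) / N) ≠ 0) :
    ‖inner ℂ (idftCol N m p) (idftCol N m q)‖ ≤
      1 / (m * |Real.sin (π * (((q : ℕ) : ℝ) - (p : ℕ)) / N)|) := by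
  set d : ℝ := ((q : ℕ) : ℝ) - (p : ℕ)
  have hhalf : 2 * π * d / N / 2 = π * d / N := by ring
  rw [inner_idftCol, norm_mul, norm_inv, Complex.norm_natCast, one_div, mul_inv, ← one_div]
  gcongr
  have := norm_geom_sum_exp_I_mul_le (θ := 2 * π * d / N) (by rwa [hhalf]) m
  rwa [hhalf, one_div] at this

theorem column_correlation_bound_far_general (N m : ℕ) (hN : 0 < N) (hm : 0 < m)
    (i : ℕ) (hi : 1 ≤ i) (hiN : ((i : ℝ) + 1) * N / m ≤ (N : ℝ) / 2)
    (ωp ωq : Fin N)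
    (hlow : (i : ℝ) * N / m ≤ |((ωp : ℕ) : ℝ) - ((ωq : ℕ) : ℝ)|)
    (hhigh : |((ωp : ℕ) : ℝ) - ((ωq : ℕ) : ℝ)| ≤ ((i : ℝ) + 1) * N / m) :
    ‖(inner ℂ (idftCol N m ωp) (idftCol N m ωq) : ℂ)‖ ≤
      1 / (m * Real.sin (Real.pi * i / m)) := by
  set x := π * (((ωq : ℕ) : ℝ) - (ωp : ℕ)) / N
  have hN' : (0 : ℝ) < N := by exact_mod_cast hN
  have hm' : (0 : ℝ) < m := by exact_mod_cast hm
  have habs_x : |x| = π * |((ωp : ℕ) : ℝ) - ((ωq : ℕ) : ℝ)| / N := by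
    rw [abs_div, abs_mul, abs_of_pos pi_pos, abs_of_pos hN', abs_sub_comm]
  have ha_pos : 0 < π * i / m := by
    have hi' : (0 : ℝ) < i := by exact_mod_cast hi
    positivity
  have ha_le : π * i / m ≤ |x| := by
    rw [habs_x, le_div_iff₀ hN', div_mul_eq_mul_div, div_le_iff₀ hm']
    rw [div_le_iff₀ hm'] at hlow
    nlinarith [pi_pos]
  have hx_le : |x| ≤ π / 2 := by
    rw [habs_x, div_le_iff₀ hN']
    nlinarith [pi_pos]
  have hsin_le := sin_le_abs_sin_of_le_abs ha_pos.le ha_le hx_le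
  have hsin_pos : 0 < Real.sin (π * i / m) :=
    sin_pos_of_pos_of_lt_pi ha_pos (by linarith [pi_pos])
  calc ‖inner ℂ (idftCol N m ωp) (idftCol N m ωq)‖
      ≤ 1 / (m * |Real.sin x|) :=
        norm_inner_idftCol_le N m ωp ωq (abs_pos.mp (hsin_pos.trans_le hsin_le))
    _ ≤ 1 / (m * Real.sin (π * i / m)) := by gcongr

/-- let `i ≥ 1` with `(i+1)N/m ≤ N/2`. If the column indices satisfy
`iN/m ≤ |ω_p − ω_q| ≤ (i+1)N/m`, then the column correlation of the partial IDFT matrix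
satisfies `f(ω_p, ω_q) ≤ 1/(m·sin(πi/m))`. -/
theorem column_correlation_bound_far (N m : ℕ) (hN : 0 < N) (hm : 0 < m) (hmN : m ≤ N)
    (i : ℕ) (hi : 1 ≤ i) (hiN : ((i : ℝ) + 1) * N / m ≤ (N : ℝ) / 2)
    (ωp ωq : Fin N)
    (hlow : (i : ℝ) * N / m ≤ |((ωp : ℕ) : ℝ) - ((ωq : ℕ) : ℝ)|)
    (hhigh : |((ωp : ℕ) : ℝ) - ((ωq : ℕ) : ℝ)| ≤ ((i : ℝ) + 1) * N / m) :
    ‖(inner ℂ (idftCol N m ωp) (idftCol N m ωq) : ℂ)‖ ≤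
      1 / (m * Real.sin (Real.pi * i / m)) :=
  column_correlation_bound_far_general N m hN hm i hi hiN ωp ωq hlow hhigh
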